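/- Let H be a hypergraph and x ∈ V(H). Then, as an identity of cardinalities, #mtr(H) + #btr_x(H) = #btr_∅(H, V(H) \ {x}) + #mtr(H \ H(x)); equivalently #mtr(H) = #btr_∅(H, V(H) \ {x}) + #mtr(H \ H(x)) − #btr_x(H). -/

import Mathlib

variable {α : Type*} [DecidableEq α]

/-- The vertex set `V(H)` of a hypergraph `H`: the union of its hyperedges. -/
def verts (H : Finset (Finset α)) : Finset α := H.sup id

/-- `H(S)`: the set of hyperedges of `H` meeting `S`. -/
def edgesMeeting (H : Finset (Finset α)) (S : Finset α) : Finset (Finset α) :=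
  H.filter fun e => (e ∩ S).Nonempty

/-- `T` is a transversal of `H`: `T ⊆ V(H)` and `T` meets every hyperedge. -/
def IsTransversal (H : Finset (Finset α)) (T : Finset α) : Prop :=
  T ⊆ verts H ∧ ∀ e ∈ H, (T ∩ e).Nonempty

/-- `tr H`: the set of transversals of `H`. -/
def tr (H : Finset (Finset α)) : Finset (Finset α) :=
  (verts H).powerset.filter fun T => ∀ e ∈ H, (T ∩ e).Nonempty

/-- `mtr H`: the set of minimal transversals of `H`. -/
def mtr (H : Finset (Finset α)) : Finset (Finset α) :=
  (tr H).filter fun T => ∀ x ∈ T, T.erase x ∉ tr H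

/-- `T` is a `B`-blocked transversal of `H'`: a transversal of `H'` such that every `x ∈ T`
has a private hyperedge in `H' \ H'(B)`. -/
def IsBlockedTr (B : Finset α) (H' : Finset (Finset α)) (T : Finset α) : Prop :=
  IsTransversal H' T ∧ ∀ x ∈ T, ∃ e ∈ H' \ edgesMeeting H' B, e ∩ T = {x}

/-- `btr_B(H')`: the set of `B`-blocked transversals of `H'`. -/
def btr (B : Finset α) (H' : Finset (Finset α)) : Finset (Finset α) :=
  (tr H').filter fun T => ∀ x ∈ T, ∃ e ∈ H' \ edgesMeeting H' B, e ∩ T = {x}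

/-- `btr_B(H', S)`: the `B`-blocked transversals of `H'` included in `S`. -/
def btrS (B : Finset α) (H' : Finset (Finset α)) (S : Finset α) : Finset (Finset α) :=
  (btr B H').filter fun T => T ⊆ S

/-! Write `H' = H \ H(x)`. A minimal transversal of `H` either avoids `x`, and these form
`btr_∅(H, V(H) \ {x})`, or contains `x`, and then `T ↦ T \ {x}` is a bijection onto the minimal
transversals of `H'` that miss some edge of `H` (the inverse adds `x` back; the missed edge is
private for `x`). The minimal transversals of `H'` that do meet every edge of `H` are exactly
`btr_x(H)`, since their private edges already avoid `x`. -/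

open Finset

lemma mem_verts {H : Finset (Finset α)} {y : α} : y ∈ verts H ↔ ∃ e ∈ H, y ∈ e := by
  simp [verts]

lemma subset_verts_of_mem_tr {H : Finset (Finset α)} {T : Finset α} (hT : T ∈ tr H) :
    T ⊆ verts H :=
  mem_powerset.1 (mem_filter.1 hT).1

lemma mem_sdiff_edgesMeeting_singleton {H : Finset (Finset α)} {x : α} {e : Finset α} :
    e ∈ H \ edgesMeeting H {x} ↔ e ∈ H ∧ x ∉ e := by
  simp only [edgesMeeting, mem_sdiff, mem_filter, inter_singleton]
  split_ifs <;> simp [*]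

lemma edgesMeeting_empty (H : Finset (Finset α)) : edgesMeeting H ∅ = ∅ := by
  simp [edgesMeeting]

lemma mem_of_inter_eq_singleton {e T : Finset α} {y : α} (h : e ∩ T = {y}) : y ∈ e ∧ y ∈ T :=
  mem_inter.1 (h ▸ mem_singleton_self y)

lemma mem_btr_iff {B : Finset α} {H : Finset (Finset α)} {T : Finset α} :
    T ∈ btr B H ↔ (∀ e ∈ H, (T ∩ e).Nonempty) ∧
      ∀ y ∈ T, ∃ e ∈ H \ edgesMeeting H B, e ∩ T = {y} := by
  simp only [btr, tr, mem_filter, mem_powerset, and_assoc]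
  refine ⟨fun h => h.2, fun ⟨hcov, hpriv⟩ => ⟨fun y hy => ?_, hcov, hpriv⟩⟩
  obtain ⟨e, he, hey⟩ := hpriv y hy
  exact mem_verts.2 ⟨e, (mem_sdiff.1 he).1, (mem_of_inter_eq_singleton hey).1⟩

lemma erase_inter_nonempty_iff {T e : Finset α} {y : α} (hy : y ∈ T)
    (hTe : (T ∩ e).Nonempty) : (T.erase y ∩ e).Nonempty ↔ e ∩ T ≠ {y} := by
  obtain ⟨w, hw⟩ := hTe
  simp only [Ne, eq_singleton_iff_unique_mem, Finset.Nonempty, mem_inter, mem_erase] at hw ⊢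
  grind

lemma erase_mem_tr_iff {H : Finset (Finset α)} {T : Finset α} {y : α} (hT : T ∈ tr H)
    (hy : y ∈ T) : T.erase y ∈ tr H ↔ ∀ e ∈ H, e ∩ T ≠ {y} := by
  simp only [tr, mem_filter, mem_powerset, (erase_subset y T).trans (subset_verts_of_mem_tr hT),
    true_and]
  exact forall₂_congr fun e he => erase_inter_nonempty_iff hy ((mem_filter.1 hT).2 e he)

lemma mtr_eq_btr_empty (H : Finset (Finset α)) : mtr H = btr ∅ H := by
  refine filter_congr fun T hT => forall₂_congr fun y hy => ?_
  simp [erase_mem_tr_iff hT hy, edgesMeeting_empty]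

lemma mem_mtr_iff {H : Finset (Finset α)} {T : Finset α} :
    T ∈ mtr H ↔ (∀ e ∈ H, (T ∩ e).Nonempty) ∧ ∀ y ∈ T, ∃ e ∈ H, e ∩ T = {y} := by
  rw [mtr_eq_btr_empty, mem_btr_iff, edgesMeeting_empty, sdiff_empty]

lemma filter_notMem_mtr_eq_btrS (H : Finset (Finset α)) (x : α) :
    {T ∈ mtr H | x ∉ T} = btrS ∅ H (verts H \ {x}) := by
  rw [btrS, ← mtr_eq_btr_empty]
  refine filter_congr fun T hT => ?_
  rw [subset_sdiff, disjoint_singleton_right]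
  exact (and_iff_right (subset_verts_of_mem_tr (mem_filter.1 hT).1)).symm

lemma btr_singleton_subset_mtr_sdiff_edgesMeeting (H : Finset (Finset α)) (x : α) :
    btr {x} H ⊆ mtr (H \ edgesMeeting H {x}) := fun _ hT =>
  have ⟨hcov, hpriv⟩ := mem_btr_iff.1 hT
  mem_mtr_iff.2 ⟨fun e he => hcov e (mem_sdiff.1 he).1, hpriv⟩

section RemoveVertex

variable {H : Finset (Finset α)} {x : α} {S T : Finset α}

lemma notMem_of_mem_mtr_sdiff_edgesMeeting (hS : S ∈ mtr (H \ edgesMeeting H {x})) : x ∉ S :=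
  fun hxS =>
    have ⟨_, he, hex⟩ := (mem_mtr_iff.1 hS).2 x hxS
    (mem_sdiff_edgesMeeting_singleton.1 he).2 (mem_of_inter_eq_singleton hex).1

lemma erase_mem_mtr_sdiff_edgesMeeting (hT : T ∈ mtr H) (hx : x ∈ T) :
    T.erase x ∈ mtr (H \ edgesMeeting H {x}) := by
  obtain ⟨hcov, hpriv⟩ := mem_mtr_iff.1 hT
  refine mem_mtr_iff.2 ⟨fun e he => ?_, fun y hy => ?_⟩
  · obtain ⟨heH, hxe⟩ := mem_sdiff_edgesMeeting_singleton.1 he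
    rw [erase_inter, erase_eq_of_notMem (notMem_mono inter_subset_right hxe)]
    exact hcov e heH
  · obtain ⟨hyx, hyT⟩ := mem_erase.1 hy
    obtain ⟨e, he, hey⟩ := hpriv y hyT
    have hxe : x ∉ e := fun hxe => hyx (mem_singleton.1 (hey ▸ mem_inter.2 ⟨hxe, hx⟩)).symm
    refine ⟨e, mem_sdiff_edgesMeeting_singleton.2 ⟨he, hxe⟩, ?_⟩
    rw [inter_erase, hey, erase_eq_of_notMem (notMem_singleton.2 hyx.symm)]

lemma erase_notMem_btr_singleton (hT : T ∈ mtr H) (hx : x ∈ T) : T.erase x ∉ btr {x} H := by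
  intro h
  obtain ⟨e, he, hex⟩ := (mem_mtr_iff.1 hT).2 x hx
  exact (erase_mem_tr_iff (mem_filter.1 hT).1 hx).1 (mem_filter.1 h).1 e he hex

lemma insert_mem_mtr (hS : S ∈ mtr (H \ edgesMeeting H {x})) (hSx : S ∉ btr {x} H) :
    insert x S ∈ mtr H := by
  obtain ⟨hcov, hpriv⟩ := mem_mtr_iff.1 hS
  obtain ⟨f, hf, hSf⟩ : ∃ f ∈ H, ¬(S ∩ f).Nonempty := by
    by_contra! h
    exact hSx (mem_btr_iff.2 ⟨h, hpriv⟩)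
  have hxf : x ∈ f := by
    by_contra hxf
    exact hSf (hcov f (mem_sdiff_edgesMeeting_singleton.2 ⟨hf, hxf⟩))
  refine mem_mtr_iff.2 ⟨fun e he => ?_, fun y hy => ?_⟩
  · by_cases hxe : x ∈ e
    · exact ⟨x, mem_inter.2 ⟨mem_insert_self x S, hxe⟩⟩
    · exact (hcov e (mem_sdiff_edgesMeeting_singleton.2 ⟨he, hxe⟩)).mono
        (inter_subset_inter_right (subset_insert x S))
  · rcases mem_insert.1 hy with rfl | hyS
    · refine ⟨f, hf, ?_⟩
      rw [inter_insert_of_mem hxf, inter_comm, not_nonempty_iff_eq_empty.1 hSf, insert_empty]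
    · obtain ⟨e, he, hey⟩ := hpriv y hyS
      obtain ⟨heH, hxe⟩ := mem_sdiff_edgesMeeting_singleton.1 he
      exact ⟨e, heH, by rw [inter_insert_of_notMem hxe, hey]⟩

end RemoveVertex

lemma card_filter_mem_mtr (H : Finset (Finset α)) (x : α) :
    #{T ∈ mtr H | x ∈ T} = #(mtr (H \ edgesMeeting H {x}) \ btr {x} H) := by
  refine card_nbij' (·.erase x) (insert x) (fun T hT => ?_) (fun S hS => ?_)
    (fun T hT => ?_) (fun S hS => ?_)
  · simp only [coe_filter, coe_sdiff, Set.mem_ofPred_eq, Set.mem_sdiff, mem_coe] at hT ⊢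
    exact ⟨erase_mem_mtr_sdiff_edgesMeeting hT.1 hT.2, erase_notMem_btr_singleton hT.1 hT.2⟩
  · simp only [coe_filter, coe_sdiff, Set.mem_ofPred_eq, Set.mem_sdiff, mem_coe] at hS ⊢
    exact ⟨insert_mem_mtr hS.1 hS.2, mem_insert_self x S⟩
  · exact insert_erase (mem_filter.1 hT).2
  · exact erase_insert (notMem_of_mem_mtr_sdiff_edgesMeeting (mem_sdiff.1 hS).1)

theorem card_mtr_rec_general (H : Finset (Finset α)) (x : α) :
    (mtr H).card + (btr {x} H).card =
      (btrS ∅ H (verts H \ {x})).card + (mtr (H \ edgesMeeting H {x})).card := by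
  rw [← filter_notMem_mtr_eq_btrS,
    ← card_sdiff_add_card_eq_card (btr_singleton_subset_mtr_sdiff_edgesMeeting H x),
    ← card_filter_mem_mtr, ← card_filter_add_card_filter_not (s := mtr H) (x ∈ ·)]
  omega

/-- `#mtr(H) + #btr_x(H) = #btr_∅(H, V(H) \ {x}) + #mtr(H \ H(x))`, i.e.
`#mtr(H) = #btr_∅(H, V(H) \ {x}) + #mtr(H \ H(x)) − #btr_x(H)`. -/
theorem card_mtr_rec (H : Finset (Finset α)) (x : α) (hx : x ∈ verts H) :
    (mtr H).card + (btr {x} H).card =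
      (btrS ∅ H (verts H \ {x})).card + (mtr (H \ edgesMeeting H {x})).card :=
  card_mtr_rec_general H x
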